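/- arXiv:math/0412015 — 3 statements merged into one kernel-verified Lean document; each statement's English description precedes it below -/
import Mathlib

section
/- For all positive integers m, n, p, and q, the identity \(\sum_{a=1-pn}^{pm}\sum_{b=1}^{qn}\binom{pm+qm-a+b-1}{pm-a}\binom{pn+qn+a-b-1}{qn-b}=\frac{pqn}{p+q}\binom{pm+qm+pn+qn}{pm+pn}\) holds (as an identity of rational numbers), where a ranges over the integers from 1-pn to pm. -/
/-!
Put `i = pm - a` and `j = qn - b`. The summand becomes `C(x + i, i) * C(y + i', i')` with
`i + i' = pm + pn - 1`, `x = qm + qn - 1 - j` and `y = j`, so for each fixed `j` the sum over `i`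
is the upper-negated Chu–Vandermonde convolution and equals `C(N - 1, pm + pn - 1)`, where
`N = (p + q)(m + n)`, independently of `j`. The `qn` values of `j` give
`qn * C(N - 1, pm + pn - 1)`, and the absorption identity `N * C(N - 1, P - 1) = P * C(N, P)` with
`P = p(m + n)` turns this into the right-hand side.
-/

open Finset

theorem Ring.choose_neg_natCast_sub_one (x k : ℕ) :
    Ring.choose (-(x : ℤ) - 1) k = (-1) ^ k * (x + k).choose k := by
  rw [show -(x : ℤ) - 1 = -((x + 1 : ℕ) : ℤ) by push_cast; ring, Ring.choose_neg,
    show ((x + 1 : ℕ) : ℤ) + k - 1 = ((x + k : ℕ) : ℤ) by push_cast; ring,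
    Ring.choose_natCast, Units.smul_def, Int.coe_negOnePow_natCast, smul_eq_mul]

/-- Chu–Vandermonde at the negative arguments `-x - 1` and `-y - 1`. -/
theorem Nat.sum_antidiagonal_add_choose_mul_add_choose (x y k : ℕ) :
    ∑ ij ∈ antidiagonal k, (x + ij.1).choose ij.1 * (y + ij.2).choose ij.2 =
      (x + y + k + 1).choose k := by
  have h := Ring.add_choose_eq k (Commute.all (-(x : ℤ) - 1) (-(y : ℤ) - 1))
  rw [show -(x : ℤ) - 1 + (-(y : ℤ) - 1) = -((x + y + 1 : ℕ) : ℤ) - 1 by push_cast; ring] at h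
  simp only [Ring.choose_neg_natCast_sub_one] at h
  have hsign : ∀ ij ∈ antidiagonal k, (-1 : ℤ) ^ ij.1 * ((x + ij.1).choose ij.1 : ℤ) *
      ((-1) ^ ij.2 * ((y + ij.2).choose ij.2 : ℤ)) =
      (-1) ^ k * ((x + ij.1).choose ij.1 * (y + ij.2).choose ij.2 : ℕ) := by
    intro ij hij
    rw [← mem_antidiagonal.mp hij]
    push_cast
    ring
  rw [sum_congr rfl hsign, ← mul_sum, add_right_comm] at h
  exact_mod_cast (mul_right_injective₀ (pow_ne_zero k (by norm_num : (-1 : ℤ) ≠ 0)) h).symm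

theorem Finset.sum_Icc_int_eq_sum_range {M : Type*} [AddCommMonoid M] (U : ℤ) (n : ℕ)
    (f : ℤ → M) : ∑ a ∈ Icc (U - n + 1) U, f a = ∑ i ∈ range n, f (U - i) := by
  symm
  refine sum_nbij' (fun i => U - i) (fun a => (U - a).toNat) ?_ ?_ ?_ ?_ ?_ <;> intros
  all_goals simp_all
  all_goals omega

theorem sum_Icc_sum_Icc_choose_mul_choose (A B C D k : ℕ) (hk : A + C = k + 1) :
    ∑ a ∈ Icc (1 - (C : ℤ)) A, ∑ b ∈ Icc (1 : ℤ) D,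
      ((A : ℤ) + B - a + b - 1).toNat.choose ((A : ℤ) - a).toNat *
        ((C : ℤ) + D + a - b - 1).toNat.choose ((D : ℤ) - b).toNat =
      D * (B + D + k).choose k := by
  rw [show (1 - C : ℤ) = A - (k + 1 : ℕ) + 1 by omega,
    show Icc (1 : ℤ) D = Icc ((D : ℤ) - (D : ℕ) + 1) D by simp, sum_Icc_int_eq_sum_range]
  simp_rw [sum_Icc_int_eq_sum_range]
  rw [sum_comm]
  have inner : ∀ j ∈ range D, ∑ i ∈ range (k + 1),
      ((A : ℤ) + B - (A - i) + (D - j) - 1).toNat.choose ((A : ℤ) - (A - i)).toNat *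
        ((C : ℤ) + D + (A - i) - (D - j) - 1).toNat.choose ((D : ℤ) - (D - j)).toNat =
      (B + D + k).choose k := by
    intro j hj
    rw [mem_range] at hj
    rw [show B + D + k = B + D - 1 - j + j + k + 1 by omega,
      ← Nat.sum_antidiagonal_add_choose_mul_add_choose,
      Nat.sum_antidiagonal_eq_sum_range_succ_mk]
    refine sum_congr rfl fun i hi => ?_
    rw [mem_range] at hi
    rw [show ((A : ℤ) + B - (A - i) + (D - j) - 1).toNat = B + D - 1 - j + i by omega,
      show ((A : ℤ) - (A - i)).toNat = i by omega,
      show ((C : ℤ) + D + (A - i) - (D - j) - 1).toNat = j + (k - i) by omega,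
      show ((D : ℤ) - (D - j)).toNat = j by omega, Nat.choose_symm_add]
  rw [sum_congr rfl inner, sum_const, card_range, smul_eq_mul]

theorem guo_zeng_chu_vandermonde_sum_general (m n p q : ℕ) :
    ∑ a ∈ Finset.Icc (1 - (p * n : ℤ)) ((p * m : ℤ)), ∑ b ∈ Finset.Icc (1 : ℤ) ((q * n : ℤ)),
      ((Nat.choose ((p * m : ℤ) + q * m - a + b - 1).toNat ((p * m : ℤ) - a).toNat : ℚ) *
        (Nat.choose ((p * n : ℤ) + q * n + a - b - 1).toNat ((q * n : ℤ) - b).toNat : ℚ)) =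
    (p * q * n : ℚ) / (p + q) *
      (Nat.choose (p * m + q * m + p * n + q * n) (p * m + p * n) : ℚ) := by
  rcases Nat.eq_zero_or_pos (p * (m + n)) with hP | hP
  · obtain rfl | ⟨rfl, rfl⟩ : p = 0 ∨ m = 0 ∧ n = 0 := by
      rcases Nat.mul_eq_zero.mp hP with h | h <;> omega
    all_goals simp
  obtain ⟨hp, hmn⟩ := CanonicallyOrderedAdd.mul_pos.mp hP
  obtain ⟨k, hk⟩ : ∃ k, p * m + p * n = k + 1 := ⟨p * (m + n) - 1, by rw [mul_add] at hP ⊢; omega⟩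
  have hS := congrArg (Nat.cast : ℕ → ℚ)
    (sum_Icc_sum_Icc_choose_mul_choose (p * m) (q * m) (p * n) (q * n) k hk)
  push_cast at hS
  rw [hS]
  have absorption := Nat.add_one_mul_choose_eq (q * m + q * n + k) k
  rw [show q * m + q * n + k + 1 = p * m + q * m + p * n + q * n by omega, ← hk] at absorption
  have hpq : (p + q : ℚ) ≠ 0 := by positivity
  have hmn' : (m + n : ℚ) ≠ 0 := by exact_mod_cast hmn.ne'
  have key : (p + q : ℚ) * (q * m + q * n + k).choose k =
      p * (p * m + q * m + p * n + q * n).choose (p * m + p * n) := by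
    refine mul_right_cancel₀ hmn' ?_
    have := congrArg (Nat.cast : ℕ → ℚ) absorption
    push_cast at this
    linear_combination this
  rw [div_mul_eq_mul_div, eq_div_iff hpq]
  linear_combination (q * n : ℚ) * key

theorem guo_zeng_chu_vandermonde_sum (m n p q : ℕ) (hm : 0 < m) (hn : 0 < n)
    (hp : 0 < p) (hq : 0 < q) :
    ∑ a ∈ Finset.Icc (1 - (p * n : ℤ)) ((p * m : ℤ)), ∑ b ∈ Finset.Icc (1 : ℤ) ((q * n : ℤ)),
      ((Nat.choose ((p * m : ℤ) + q * m - a + b - 1).toNat ((p * m : ℤ) - a).toNat : ℚ) *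
        (Nat.choose ((p * n : ℤ) + q * n + a - b - 1).toNat ((q * n : ℤ) - b).toNat : ℚ)) =
    (p * q * n : ℚ) / (p + q) *
      (Nat.choose (p * m + q * m + p * n + q * n) (p * m + p * n) : ℚ) :=
  guo_zeng_chu_vandermonde_sum_general m n p q
end

section
/- (Corollary 6) For all positive integers m, n, and r, the identity \(\sum_{a=1}^{m-r}\sum_{b=1}^{n-r}\binom{m+n-a+b-1}{m-r-a}\binom{m+n+a-b-1}{n-r-b}=\frac{mn}{2(m+n)}\binom{m+n}{m}^2-\frac{r}{2}\binom{2m+2n}{2m}+\frac{r}{2}\binom{m+n}{m}^2+\sum_{k=1}^{r-1}(r-k)\binom{m+n}{m-k}\binom{m+n}{n-k}\) holds (as an identity of rational numbers), where sums over empty ranges are 0 and a binomial coefficient with negative lower index is 0. -/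
/-!
Write `A k = C(m+n, m-k) * C(m+n, m+k)`, which equals `C(m+n, m-k) * C(m+n, n-k)`. Both sides
equal `∑_{k>r} (k - r) A k`.

Left side: deleting the first row and column of the `(m-r) × (n-r)` array of summands leaves the
array for `r + 1`. With `q = m + n - 1`, Vandermonde's identity and its upper-index form turn the
first row into `∑_{k>r} C(q, m-k) C(q+1, m+k)` and the first column into
`∑_{k>r} C(q, m+k-1) C(q+1, m-k)`. Pascal's rule splits their sum into `∑_{k>r} A k` plus a
telescoping sum of `C(q, m+k-1) C(q, m-k)`, which cancels the corner entry. Peeling off one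
`∑_{k>r} A k` at a time gives the claim by downward induction on `r`.

Right side: Vandermonde gives `C(2m+2n, 2m) = C(m+n, m)^2 + 2 ∑_{k≥1} A k`. Absorption,
`k C(N, k) = N C(N-1, k-1)`, makes `2k A k` a telescoping difference, so
`∑_{k≥1} k A k = mn/(2(m+n)) C(m+n, m)^2`.
-/

/-- Binomial coefficient with natural upper index and integer lower index,
equal to `0` when the lower index is negative. -/
def chooseZ (N : ℕ) (k : ℤ) : ℕ :=
  if k < 0 then 0 else N.choose k.toNat

open Finset

lemma chooseZ_of_neg {N : ℕ} {k : ℤ} (hk : k < 0) : chooseZ N k = 0 := if_pos hk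

@[simp]
lemma chooseZ_natCast (N j : ℕ) : chooseZ N j = N.choose j := by
  simp [chooseZ]

lemma chooseZ_of_lt {N : ℕ} {k : ℤ} (hk : (N : ℤ) < k) : chooseZ N k = 0 := by
  lift k to ℕ using by omega
  simpa using Nat.choose_eq_zero_of_lt (by omega)

lemma chooseZ_succ (N : ℕ) (k : ℤ) : chooseZ (N + 1) k = chooseZ N k + chooseZ N (k - 1) := by
  rcases lt_or_ge k 0 with hk | hk
  · simp [chooseZ_of_neg, hk, show k - 1 < 0 by omega]
  lift k to ℕ using hk
  cases k with
  | zero => simp [chooseZ]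
  | succ j =>
    rw [show ((j + 1 : ℕ) : ℤ) - 1 = j by push_cast; ring]
    simp only [chooseZ_natCast, Nat.choose_succ_succ', add_comm]

lemma chooseZ_symm (N : ℕ) (k : ℤ) : chooseZ N (N - k) = chooseZ N k := by
  rcases lt_or_ge k 0 with hk | hk
  · rw [chooseZ_of_neg hk, chooseZ_of_lt (by omega)]
  lift k to ℕ using hk
  rcases le_or_gt k N with hkN | hkN
  · rw [← Nat.cast_sub hkN, chooseZ_natCast, chooseZ_natCast, Nat.choose_symm hkN]
  · rw [chooseZ_of_neg (by omega), chooseZ_of_lt (by omega)]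

lemma mul_chooseZ_succ (N : ℕ) (k : ℤ) : k * chooseZ (N + 1) k = (N + 1) * chooseZ N (k - 1) := by
  rcases lt_or_ge k 0 with hk | hk
  · simp [chooseZ_of_neg, hk, show k - 1 < 0 by omega]
  lift k to ℕ using hk
  cases k with
  | zero => simp [chooseZ_of_neg (k := -1) (by norm_num)]
  | succ j =>
    rw [show ((j + 1 : ℕ) : ℤ) - 1 = j by push_cast; ring, chooseZ_natCast, chooseZ_natCast]
    exact_mod_cast (mul_comm _ _).trans (Nat.add_one_mul_choose_eq N j).symm

theorem sum_antidiagonal_choose_mul_choose (L u v : ℕ) :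
    ∑ ij ∈ antidiagonal L, ij.1.choose u * ij.2.choose v = (L + 1).choose (u + v + 1) := by
  induction L generalizing v with
  | zero => cases u <;> cases v <;> simp [Nat.choose_eq_zero_of_lt]
  | succ L ih =>
    rw [Nat.sum_antidiagonal_succ']
    cases v with
    | zero =>
      have h := ih 0
      simp only [Nat.choose_zero_right, mul_one] at h ⊢
      rw [h, Nat.choose_succ_succ' (L + 1) u]
    | succ v =>
      simp only [Nat.choose_succ_succ' _ v, mul_add, sum_add_distrib, ih, Nat.choose_zero_succ,
        mul_zero, zero_add]
      rw [Nat.choose_succ_succ' (L + 1)]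
      ring_nf

theorem sum_antidiagonal_choose_add_mul_choose (q L u v : ℕ) :
    ∑ ij ∈ antidiagonal L, (q + ij.1).choose u * ij.2.choose v =
      ∑ ij ∈ antidiagonal u, q.choose ij.1 * (L + 1).choose (ij.2 + v + 1) := by
  simp_rw [Nat.add_choose_eq q, sum_mul]
  rw [sum_comm]
  refine sum_congr rfl fun ij _ => ?_
  simp_rw [mul_assoc, ← mul_sum, sum_antidiagonal_choose_mul_choose]

theorem sum_Icc_sub_succ {G : Type*} [AddCommGroup G] (f : ℕ → G) {a b : ℕ} (h : a ≤ b + 1) :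
    ∑ k ∈ Icc a b, (f k - f (k + 1)) = f a - f (b + 1) := by
  rw [← Ico_add_one_right_eq_Icc, ← neg_sub, ← sum_Ico_sub f h, ← sum_neg_distrib]
  simp only [neg_sub]

def pairProd (N : ℕ) (M k : ℤ) : ℚ := chooseZ N (M - k) * chooseZ N (M + k)

def shiftedPairProd (q : ℕ) (M k : ℤ) : ℚ := chooseZ q (M + k - 1) * chooseZ q (M - k)

lemma pairProd_of_lt {N : ℕ} {M k : ℤ} (h : M < k) : pairProd N M k = 0 := by
  simp [pairProd, chooseZ_of_neg (show M - k < 0 by omega)]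

lemma shiftedPairProd_add_one (q : ℕ) (M k : ℤ) :
    shiftedPairProd q M (k + 1) = chooseZ q (M + k) * chooseZ q (M - k - 1) := by
  rw [shiftedPairProd, ← add_assoc, add_sub_cancel_right, sub_add_eq_sub_sub]

lemma cross_eq_pairProd_add_sub (q : ℕ) (M k : ℤ) :
    (chooseZ q (M - k) : ℚ) * chooseZ (q + 1) (M + k) +
        (chooseZ q (M + k - 1) : ℚ) * chooseZ (q + 1) (M - k) =
      pairProd (q + 1) M k + (shiftedPairProd q M k - shiftedPairProd q M (k + 1)) := by
  rw [shiftedPairProd_add_one]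
  simp only [pairProd, shiftedPairProd, chooseZ_succ, Nat.cast_add]
  ring

lemma two_mul_mul_pairProd (q : ℕ) (M k : ℤ) :
    2 * k * pairProd (q + 1) M k =
      (q + 1) * (shiftedPairProd q M k - shiftedPairProd q M (k + 1)) := by
  have hplus : ((M + k : ℤ) : ℚ) * chooseZ (q + 1) (M + k) = (q + 1) * chooseZ q (M + k - 1) := by
    exact_mod_cast mul_chooseZ_succ q (M + k)
  have hminus : ((M - k : ℤ) : ℚ) * chooseZ (q + 1) (M - k) = (q + 1) * chooseZ q (M - k - 1) := by
    exact_mod_cast mul_chooseZ_succ q (M - k)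
  rw [shiftedPairProd_add_one]
  simp only [pairProd, shiftedPairProd] at *
  rw [chooseZ_succ q (M + k), chooseZ_succ q (M - k)] at *
  push_cast at *
  -- `2k = (M + k) - (M - k)`, and absorption rewrites each of the two products
  linear_combination (↑(chooseZ q (M - k)) + ↑(chooseZ q (M - k - 1))) * hplus -
    (↑(chooseZ q (M + k)) + ↑(chooseZ q (M + k - 1))) * hminus

theorem two_mul_sum_mul_pairProd (q M : ℕ) :
    2 * ∑ k ∈ Icc 1 M, (k : ℚ) * pairProd (q + 1) M k =
      (q + 1) * chooseZ q M * chooseZ q (M - 1) := by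
  have hterm : ∀ k ∈ Icc 1 M, 2 * ((k : ℚ) * pairProd (q + 1) M k) =
      (q + 1) * (shiftedPairProd q M k - shiftedPairProd q M (k + 1 : ℕ)) := by
    intro k _
    have := two_mul_mul_pairProd q M k
    push_cast at this ⊢
    rw [← mul_assoc, this]
  have hfirst : shiftedPairProd q M (1 : ℕ) = chooseZ q M * chooseZ q (M - 1) := by
    simp [shiftedPairProd]
  have hlast : shiftedPairProd q M (M + 1 : ℕ) = 0 := by
    rw [shiftedPairProd, chooseZ_of_neg (show (M : ℤ) - (M + 1 : ℕ) < 0 by omega), Nat.cast_zero,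
      mul_zero]
  rw [mul_sum, sum_congr rfl hterm, ← mul_sum,
    sum_Icc_sub_succ (fun k : ℕ => shiftedPairProd q M k) (by omega), hfirst, hlast, sub_zero,
    mul_assoc]

theorem choose_two_mul_two_mul (N M : ℕ) :
    ((2 * N).choose (2 * M) : ℚ) = (N.choose M : ℚ) ^ 2 + 2 * ∑ k ∈ Icc 1 M, pairProd N M k := by
  set f : ℕ → ℕ := fun i => N.choose i * N.choose (2 * M - i)
  have hvandermonde : (2 * N).choose (2 * M) = ∑ i ∈ range (M + (M + 1)), f i := by
    rw [two_mul N, Nat.add_choose_eq, Nat.sum_antidiagonal_eq_sum_range_succ_mk,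
      Nat.succ_eq_add_one, show 2 * M + 1 = M + (M + 1) by omega]
  have hreflect : ∑ i ∈ range M, f i = ∑ i ∈ range M, f (M + (i + 1)) := by
    rw [← sum_range_reflect]
    refine sum_congr rfl fun i hi => ?_
    have := mem_range.1 hi
    simp only [f]
    rw [show 2 * M - (M - 1 - i) = M + (i + 1) by omega,
      show 2 * M - (M + (i + 1)) = M - 1 - i by omega, mul_comm]
  have hpair : ∑ k ∈ Icc 1 M, pairProd N M k = ∑ i ∈ range M, (f (M + (i + 1)) : ℚ) := by
    rw [← Ico_add_one_right_eq_Icc, sum_Ico_eq_sum_range, Nat.add_sub_cancel]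
    refine sum_congr rfl fun i hi => ?_
    have := mem_range.1 hi
    rw [pairProd, show (M : ℤ) - (1 + i : ℕ) = (M - 1 - i : ℕ) by push_cast; omega,
      show (M : ℤ) + (1 + i : ℕ) = (M + (i + 1) : ℕ) by push_cast; ring]
    simp only [f, chooseZ_natCast, Nat.cast_mul]
    rw [show 2 * M - (M + (i + 1)) = M - 1 - i by omega, mul_comm]
  rw [hvandermonde, sum_range_add, sum_range_succ', hreflect, hpair]
  simp only [f, add_zero, show 2 * M - M = M by omega]
  push_cast
  ring

theorem sum_mul_pairProd_eq {m : ℕ} (n : ℕ) (hm : 0 < m) :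
    ∑ k ∈ Icc 1 m, (k : ℚ) * pairProd (m + n) m k =
      (m * n : ℚ) / (2 * (m + n)) * ((m + n).choose m : ℚ) ^ 2 := by
  obtain ⟨q, hq⟩ : ∃ q, m + n = q + 1 := ⟨m + n - 1, by omega⟩
  have hmn : (m : ℚ) + n = q + 1 := by exact_mod_cast hq
  have hm' : (m : ℚ) * (q + 1).choose m = (q + 1) * chooseZ q (m - 1) := by
    exact_mod_cast mul_chooseZ_succ q m
  have hn' : (n : ℚ) * (q + 1).choose m = (q + 1) * chooseZ q m := by
    have hsymm : chooseZ (q + 1) n = (q + 1).choose m := by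
      rw [← chooseZ_symm, ← chooseZ_natCast]; congr 1; push_cast; omega
    have hsymm' : chooseZ q (n - 1) = chooseZ q m := by
      rw [← chooseZ_symm]; congr 1; omega
    rw [← hsymm, ← hsymm']
    exact_mod_cast mul_chooseZ_succ q n
  rw [hq, hmn, div_mul_eq_mul_div, eq_div_iff (by positivity)]
  linear_combination (q + 1 : ℚ) * two_mul_sum_mul_pairProd q m - (n : ℚ) * (q + 1).choose m * hm' -
    ((q + 1 : ℚ) * chooseZ q (m - 1)) * hn'

theorem Nat.choose_congr_of_ne_zero {n n' k : ℕ} (h : k ≠ 0 → n = n') :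
    n.choose k = n'.choose k := by
  rcases eq_or_ne k 0 with rfl | hk
  · simp
  · rw [h hk]

def guoZengTerm (m n r a b : ℕ) : ℚ :=
  ((m + n - a + b - 1).choose (m - r - a) : ℚ) * ((m + n + a - b - 1).choose (n - r - b) : ℚ)

def guoZengSum (m n r : ℕ) : ℚ :=
  ∑ a ∈ Icc 1 (m - r), ∑ b ∈ Icc 1 (n - r), guoZengTerm m n r a b

lemma guoZengTerm_succ_succ (m n r a b : ℕ) :
    guoZengTerm m n r (a + 1) (b + 1) = guoZengTerm m n (r + 1) a b := by
  simp only [guoZengTerm]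
  rw [show m - r - (a + 1) = m - (r + 1) - a by omega,
    show n - r - (b + 1) = n - (r + 1) - b by omega]
  -- truncated subtraction can make the upper indices differ, but only where the lower index is 0
  congr 2 <;> exact Nat.choose_congr_of_ne_zero fun _ => by omega

lemma guoZengTerm_comm (m n r a b : ℕ) : guoZengTerm m n r a b = guoZengTerm n m r b a := by
  simp only [guoZengTerm]
  rw [mul_comm]
  congr 2 <;> exact Nat.choose_congr_of_ne_zero fun _ => by omega

theorem sum_Icc_one_succ {M : Type*} [AddCommMonoid M] (f : ℕ → M) (K : ℕ) :
    ∑ a ∈ Icc 1 (K + 1), f a = f 1 + ∑ a ∈ Icc 1 K, f (a + 1) := by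
  rw [Icc_eq_cons_Ioc (by omega), sum_cons, ← Icc_add_one_left_eq_Ioc, ← map_add_right_Icc, sum_map]
  rfl

theorem sum_Icc_one_sum_Icc_one_succ {G : Type*} [AddCommGroup G] (f : ℕ → ℕ → G) (M K : ℕ) :
    ∑ a ∈ Icc 1 (M + 1), ∑ b ∈ Icc 1 (K + 1), f a b =
      ∑ a ∈ Icc 1 M, ∑ b ∈ Icc 1 K, f (a + 1) (b + 1) +
        (∑ b ∈ Icc 1 (K + 1), f 1 b + ∑ a ∈ Icc 1 (M + 1), f a 1 - f 1 1) := by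
  rw [sum_Icc_one_succ (fun a => ∑ b ∈ Icc 1 (K + 1), f a b), sum_Icc_one_succ (fun a => f a 1)]
  simp only [sum_Icc_one_succ (f (_ + 1)), sum_add_distrib]
  abel

lemma sum_guoZengTerm_one_left_eq_sum_antidiagonal {m n r q : ℕ} (hq : m + n = q + 1) :
    ∑ b ∈ Icc 1 (n - r), guoZengTerm m n r 1 b =
      ∑ ij ∈ antidiagonal q, ((q + ij.1).choose (m - r - 1) * ij.2.choose (m + r) : ℕ) := by
  calc ∑ b ∈ Icc 1 (n - r), guoZengTerm m n r 1 b
      = ∑ j ∈ range (n - r), ((q + j).choose (m - r - 1) : ℚ) * (q - j).choose (m + r) := by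
        rw [← Ico_add_one_right_eq_Icc, sum_Ico_eq_sum_range, Nat.add_sub_cancel]
        refine sum_congr rfl fun j hj => ?_
        simp only [mem_range] at hj
        rw [guoZengTerm, show m + n - 1 + (1 + j) - 1 = q + j by omega,
          show m + n + 1 - (1 + j) - 1 = q - j by omega,
          Nat.choose_symm_of_eq_add (show q - j = n - r - (1 + j) + (m + r) by omega)]
    _ = ∑ j ∈ range (q + 1), ((q + j).choose (m - r - 1) : ℚ) * (q - j).choose (m + r) := by
        refine sum_subset (range_subset_range.2 (show n - r ≤ q + 1 by omega)) fun j hjq hj => ?_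
        simp only [mem_range] at hjq hj
        simp [Nat.choose_eq_zero_of_lt (show q - j < m + r by omega)]
    _ = _ := by rw [Nat.sum_antidiagonal_eq_sum_range_succ_mk]; push_cast; rfl

theorem sum_guoZengTerm_one_left {m r : ℕ} (n : ℕ) (hr : r < m) :
    ∑ b ∈ Icc 1 (n - r), guoZengTerm m n r 1 b =
      ∑ k ∈ Icc (r + 1) (m + n), (chooseZ (m + n - 1) (m - k) : ℚ) * chooseZ (m + n) (m + k) := by
  obtain ⟨q, hq⟩ : ∃ q, m + n = q + 1 := ⟨m + n - 1, by omega⟩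
  rw [sum_guoZengTerm_one_left_eq_sum_antidiagonal hq, hq, Nat.add_sub_cancel,
    sum_antidiagonal_choose_add_mul_choose,
    ← sum_subset (Icc_subset_Icc_right (show m ≤ q + 1 by omega))]
  · push_cast
    refine sum_nbij' (fun ij => r + 1 + ij.2) (fun k => (m - k, k - r - 1)) ?_ ?_ ?_ ?_ ?_ <;>
      simp only [HasAntidiagonal.mem_antidiagonal, mem_Icc, Prod.forall, Prod.mk.injEq]
    · omega
    · omega
    · omega
    · omega
    · intro i j hij
      rw [show (m : ℤ) - (r + 1 + j : ℕ) = (i : ℕ) by push_cast; omega,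
        show (m : ℤ) + (r + 1 + j : ℕ) = (j + (m + r) + 1 : ℕ) by push_cast; ring,
        chooseZ_natCast, chooseZ_natCast]
  · intro k hk hk'
    simp only [mem_Icc] at hk hk'
    rw [chooseZ_of_neg (show (m : ℤ) - k < 0 by omega), Nat.cast_zero, zero_mul]

theorem sum_guoZengTerm_one_right {n r : ℕ} (m : ℕ) (hr : r < n) :
    ∑ a ∈ Icc 1 (m - r), guoZengTerm m n r a 1 =
      ∑ k ∈ Icc (r + 1) (m + n),
        (chooseZ (m + n - 1) (m + k - 1) : ℚ) * chooseZ (m + n) (m - k) := by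
  simp_rw [guoZengTerm_comm m n r _ 1]
  rw [sum_guoZengTerm_one_left m hr, add_comm n m]
  refine sum_congr rfl fun k _ => ?_
  rw [← chooseZ_symm (m + n - 1) (m + k - 1), ← chooseZ_symm (m + n) (m - k)]
  congr 3 <;> push_cast <;> omega

lemma guoZengTerm_one_one {m n r : ℕ} (hm : r < m) (hn : r < n) :
    guoZengTerm m n r 1 1 = shiftedPairProd (m + n - 1) m (r + 1 : ℕ) := by
  rw [guoZengTerm, shiftedPairProd, ← chooseZ_symm (m + n - 1) (m + (r + 1 : ℕ) - 1),
    show ((m + n - 1 : ℕ) : ℤ) - (m + (r + 1 : ℕ) - 1) = (n - r - 1 : ℕ) by omega,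
    show (m : ℤ) - (r + 1 : ℕ) = (m - r - 1 : ℕ) by omega, chooseZ_natCast, chooseZ_natCast,
    show m + n - 1 + 1 - 1 = m + n - 1 by omega, show m + n + 1 - 1 - 1 = m + n - 1 by omega,
    mul_comm]

theorem guoZengSum_eq_add {m n r : ℕ} (hm : r < m) (hn : r < n) :
    guoZengSum m n r =
      guoZengSum m n (r + 1) + ∑ k ∈ Icc (r + 1) (m + n), pairProd (m + n) m k := by
  obtain ⟨M, hM⟩ : ∃ M, m - r = M + 1 := ⟨m - r - 1, by omega⟩
  obtain ⟨K, hK⟩ : ∃ K, n - r = K + 1 := ⟨n - r - 1, by omega⟩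
  have hinner : ∑ a ∈ Icc 1 M, ∑ b ∈ Icc 1 K, guoZengTerm m n r (a + 1) (b + 1) =
      guoZengSum m n (r + 1) := by
    simp_rw [guoZengTerm_succ_succ]
    rw [guoZengSum, show m - (r + 1) = M by omega, show n - (r + 1) = K by omega]
  rw [guoZengSum, hM, hK, sum_Icc_one_sum_Icc_one_succ, hinner, ← hM, ← hK,
    sum_guoZengTerm_one_left n hm, sum_guoZengTerm_one_right m hn, ← sum_add_distrib,
    guoZengTerm_one_one hm hn]
  obtain ⟨q, hq⟩ : ∃ q, m + n = q + 1 := ⟨m + n - 1, by omega⟩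
  have hcross : ∀ k ∈ Icc (r + 1) (q + 1),
      (chooseZ q (m - k) : ℚ) * chooseZ (q + 1) (m + k) +
          (chooseZ q (m + k - 1) : ℚ) * chooseZ (q + 1) (m - k) =
        pairProd (q + 1) m k + (shiftedPairProd q m k - shiftedPairProd q m (k + 1 : ℕ)) := by
    intro k _
    rw [cross_eq_pairProd_add_sub, Nat.cast_succ]
  have hvanish : shiftedPairProd q m (q + 1 + 1 : ℕ) = 0 := by
    rw [shiftedPairProd, chooseZ_of_lt (show (q : ℤ) < m + (q + 1 + 1 : ℕ) - 1 by omega),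
      Nat.cast_zero, zero_mul]
  rw [hq, Nat.add_sub_cancel, sum_congr rfl hcross, sum_add_distrib,
    sum_Icc_sub_succ (fun k : ℕ => shiftedPairProd q m k) (by omega), hvanish]
  ring

def weightedTail (m n r : ℕ) : ℚ :=
  ∑ k ∈ Icc (r + 1) (m + n), ((k : ℚ) - r) * pairProd (m + n) m k

lemma weightedTail_eq_add (m n r : ℕ) :
    weightedTail m n r =
      weightedTail m n (r + 1) + ∑ k ∈ Icc (r + 1) (m + n), pairProd (m + n) m k := by
  have hshift : ∑ k ∈ Icc (r + 1) (m + n), ((k : ℚ) - (r + 1 : ℕ)) * pairProd (m + n) m k =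
      weightedTail m n (r + 1) := by
    refine (sum_subset (Icc_subset_Icc_left (by omega)) fun k hk hk' => ?_).symm
    simp only [mem_Icc] at hk hk'
    simp [show k = r + 1 by omega]
  rw [weightedTail, ← hshift, ← sum_add_distrib]
  refine sum_congr rfl fun k _ => ?_
  push_cast
  ring

lemma pairProd_add_eq_zero {m n : ℕ} {k : ℤ} (h : m < k ∨ n < k) : pairProd (m + n) m k = 0 := by
  rcases h with h | h
  · exact pairProd_of_lt h
  · simp [pairProd, chooseZ_of_lt (show ((m + n : ℕ) : ℤ) < m + k by push_cast; omega)]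

lemma guoZengSum_of_le {m n r : ℕ} (h : m ≤ r ∨ n ≤ r) : guoZengSum m n r = 0 := by
  rcases h with h | h <;> simp [guoZengSum, Nat.sub_eq_zero_of_le h]

lemma weightedTail_of_le {m n r : ℕ} (h : m ≤ r ∨ n ≤ r) : weightedTail m n r = 0 :=
  sum_eq_zero fun k hk => by
    simp only [mem_Icc] at hk
    rw [pairProd_add_eq_zero (by omega), mul_zero]

theorem guoZengSum_eq_weightedTail (m n r : ℕ) : guoZengSum m n r = weightedTail m n r := by
  induction hd : m - r generalizing r with
  | zero => rw [guoZengSum_of_le (.inl (by omega)), weightedTail_of_le (.inl (by omega))]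
  | succ d ih =>
    rcases lt_or_ge r n with hn | hn
    · rw [guoZengSum_eq_add (by omega) hn, weightedTail_eq_add, ih (r + 1) (by omega)]
    · rw [guoZengSum_of_le (.inr hn), weightedTail_of_le (.inr hn)]

theorem sum_Icc_intCast_sub_one {M : Type*} [AddCommMonoid M] (f : ℤ → M) (a b : ℕ) :
    ∑ k ∈ Icc (a : ℤ) (b - 1), f k = ∑ k ∈ Ico a b, f k := by
  refine (sum_nbij' (↑) Int.toNat ?_ ?_ ?_ ?_ ?_).symm <;>
    simp only [mem_Icc, mem_Ico, implies_true] <;> omega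

lemma sum_mul_pairProd_Icc_of_le {m L : ℕ} (N : ℕ) (hL : m ≤ L) (g : ℕ → ℚ) :
    ∑ k ∈ Icc 1 m, g k * pairProd N m k = ∑ k ∈ Icc 1 L, g k * pairProd N m k := by
  refine sum_subset (Icc_subset_Icc_right hL) fun k hkL hk => ?_
  simp only [mem_Icc] at hkL hk
  rw [pairProd_of_lt (by omega), mul_zero]

theorem sum_Icc_sub_mul_chooseZ_mul_chooseZ (m n r : ℕ) {L : ℕ} (hL : r ≤ L) :
    ∑ k ∈ Icc (1 : ℤ) (r - 1), ((r : ℚ) - k) * (chooseZ (m + n) (m - k) : ℚ) *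
        (chooseZ (m + n) (n - k) : ℚ) =
      ∑ k ∈ Icc 1 L, ((r - k : ℕ) : ℚ) * pairProd (m + n) m k := by
  rw [show Icc (1 : ℤ) (r - 1) = Icc ((1 : ℕ) : ℤ) (r - 1) by norm_num, sum_Icc_intCast_sub_one]
  refine sum_subset_zero_on_sdiff (Ico_subset_Icc_self.trans (Icc_subset_Icc_right hL))
    (fun k hk => ?_) (fun k hk => ?_)
  · simp only [mem_sdiff, mem_Ico, mem_Icc] at hk
    simp [Nat.sub_eq_zero_of_le (show r ≤ k by omega)]
  · simp only [mem_Ico] at hk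
    rw [pairProd, Int.cast_natCast, ← Nat.cast_sub hk.2.le, mul_assoc,
      ← chooseZ_symm (m + n) (n - k)]
    congr 4
    push_cast
    ring

theorem weightedTail_eq_sum_tsub_mul (m n r : ℕ) {L : ℕ} (hL : m + n ≤ L) :
    weightedTail m n r = ∑ k ∈ Icc 1 L, ((k - r : ℕ) : ℚ) * pairProd (m + n) m k := by
  refine sum_subset_zero_on_sdiff (Icc_subset_Icc (Nat.le_add_left 1 r) hL) (fun k hk => ?_)
    (fun k hk => ?_)
  · simp only [mem_sdiff, mem_Icc] at hk
    rcases le_or_gt k r with h | h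
    · simp [Nat.sub_eq_zero_of_le h]
    · simp [pairProd_of_lt (show (m : ℤ) < k by omega)]
  · simp only [mem_Icc] at hk
    rw [Nat.cast_sub (by omega)]

theorem guo_zeng_corollary6_general (m n r : ℕ) (hm : 0 < m) :
    ∑ a ∈ Finset.Icc 1 (m - r), ∑ b ∈ Finset.Icc 1 (n - r),
      ((Nat.choose (m + n - a + b - 1) (m - r - a) : ℚ) *
        (Nat.choose (m + n + a - b - 1) (n - r - b) : ℚ)) =
    (m * n : ℚ) / (2 * (m + n)) * (Nat.choose (m + n) m : ℚ) ^ 2 -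
    (r : ℚ) / 2 * (Nat.choose (2 * m + 2 * n) (2 * m) : ℚ) +
    (r : ℚ) / 2 * (Nat.choose (m + n) m : ℚ) ^ 2 +
    ∑ k ∈ Finset.Icc (1 : ℤ) ((r : ℤ) - 1),
      ((r : ℚ) - (k : ℚ)) * (chooseZ (m + n) ((m : ℤ) - k) : ℚ) *
        (chooseZ (m + n) ((n : ℤ) - k) : ℚ) := by
  set L := m + n + r
  set A : ℕ → ℚ := fun k => pairProd (m + n) m k
  have hsplit : ∑ k ∈ Icc 1 L, ((k - r : ℕ) : ℚ) * A k =
      ∑ k ∈ Icc 1 L, k * A k - r * ∑ k ∈ Icc 1 L, A k + ∑ k ∈ Icc 1 L, ((r - k : ℕ) : ℚ) * A k := by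
    rw [mul_sum, ← sum_sub_distrib, ← sum_add_distrib]
    refine sum_congr rfl fun k _ => ?_
    rcases le_total k r with h | h <;> simp [Nat.sub_eq_zero_of_le, Nat.cast_sub, h] <;> ring
  have hsum : ∑ k ∈ Icc 1 m, A k = ∑ k ∈ Icc 1 L, A k := by
    simpa using sum_mul_pairProd_Icc_of_le (m + n) (show m ≤ L by omega) fun _ => 1
  show guoZengSum m n r = _
  rw [guoZengSum_eq_weightedTail, weightedTail_eq_sum_tsub_mul m n r (show m + n ≤ L by omega),
    sum_Icc_sub_mul_chooseZ_mul_chooseZ m n r (show r ≤ L by omega), hsplit,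
    ← sum_mul_pairProd_eq n hm, sum_mul_pairProd_Icc_of_le (m + n) (show m ≤ L by omega),
    show 2 * m + 2 * n = 2 * (m + n) by ring, choose_two_mul_two_mul, hsum]
  ring

theorem guo_zeng_corollary6 (m n r : ℕ) (hm : 0 < m) (hn : 0 < n) (hr : 0 < r) :
    ∑ a ∈ Finset.Icc 1 (m - r), ∑ b ∈ Finset.Icc 1 (n - r),
      ((Nat.choose (m + n - a + b - 1) (m - r - a) : ℚ) *
        (Nat.choose (m + n + a - b - 1) (n - r - b) : ℚ)) =
    (m * n : ℚ) / (2 * (m + n)) * (Nat.choose (m + n) m : ℚ) ^ 2 -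
    (r : ℚ) / 2 * (Nat.choose (2 * m + 2 * n) (2 * m) : ℚ) +
    (r : ℚ) / 2 * (Nat.choose (m + n) m : ℚ) ^ 2 +
    ∑ k ∈ Finset.Icc (1 : ℤ) ((r : ℤ) - 1),
      ((r : ℚ) - (k : ℚ)) * (chooseZ (m + n) ((m : ℤ) - k) : ℚ) *
        (chooseZ (m + n) ((n : ℤ) - k) : ℚ) :=
  guo_zeng_corollary6_general m n r hm
end

section
/- Let m and n be positive integers. Then for every rational number x, \(2\sum_{a=1}^{m}\sum_{b=1}^{n}\binom{x+a-1}{n+b-1}\binom{x+m-a}{n-b}=m\binom{2x+m-1}{2n-1}\). -/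
/-! `qbinom` is `Ring.choose` on `ℚ`, so Vandermonde's convolution expands `qbinom (y + z) (2n - 1)`.
Sorting its terms `i + j = 2n - 1` by whether `i ≥ n` or `j ≥ n` shows that the inner sum
`T(y, z) = ∑_b qbinom y (n + b - 1) * qbinom z (n - b)` satisfies
`T(y, z) + T(z, y) = qbinom (y + z) (2n - 1)`. The reflection `a ↦ m + 1 - a` swaps the arguments
`x + a - 1` and `x + m - a`, whose sum is always `2x + m - 1`, so twice the double sum is `m` copies
of `qbinom (2x + m - 1) (2n - 1)`. -/

/-- The generalized binomial coefficient `x(x-1)⋯(x-k+1)/k!` for a rational `x`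
and a natural number `k`. -/
noncomputable def qbinom (x : ℚ) (k : ℕ) : ℚ :=
  (∏ i ∈ Finset.range k, (x - (i : ℚ))) / (Nat.factorial k : ℚ)

open Finset

theorem Finset.sum_Icc_one_eq_sum_range {M : Type*} [AddCommMonoid M] (f : ℕ → M) (n : ℕ) :
    ∑ b ∈ Icc 1 n, f b = ∑ i ∈ range n, f (i + 1) := by
  rw [← Ico_add_one_right_eq_Icc, sum_Ico_eq_sum_range, add_tsub_cancel_right]
  simp only [add_comm]

theorem Finset.sum_Icc_one_reflect {M : Type*} [AddCommMonoid M] (f : ℕ → M) (m : ℕ) :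
    ∑ a ∈ Icc 1 m, f (m + 1 - a) = ∑ a ∈ Icc 1 m, f a :=
  sum_nbij' (fun a => m + 1 - a) (fun a => m + 1 - a) (by simp; omega) (by simp; omega)
    (by simp; omega) (by simp; omega) (by simp)

theorem Finset.Nat.sum_antidiagonal_two_mul_sub_one {M : Type*} [AddCommMonoid M]
    (f : ℕ → ℕ → M) {n : ℕ} (hn : 0 < n) :
    ∑ ij ∈ antidiagonal (2 * n - 1), f ij.1 ij.2 =
      ∑ b ∈ Icc 1 n, (f (n + b - 1) (n - b) + f (n - b) (n + b - 1)) := by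
  rw [Nat.sum_antidiagonal_eq_sum_range_succ f, show (2 * n - 1).succ = n + n by omega,
    sum_range_add, add_comm, sum_Icc_one_eq_sum_range, sum_add_distrib]
  congr 1
  · refine sum_congr rfl fun i _ => ?_
    congr 1
    omega
  · rw [← sum_range_reflect]
    refine sum_congr rfl fun i hi => ?_
    rw [mem_range] at hi
    congr 1 <;> omega

theorem qbinom_eq_ringChoose (x : ℚ) (k : ℕ) : qbinom x k = Ring.choose x k := by
  rw [Ring.choose_eq_smul, qbinom, ← descPochhammer_eval_eq_prod_range, smul_eq_mul,
    ← descPochhammer_map (Int.castRingHom ℚ), Polynomial.eval_map,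
    ← Polynomial.eval₂_smulOneHom_eq_smeval, inv_mul_eq_div]
  congr 2
  ext
  simp

theorem qbinom_add_two_mul_sub_one (y z : ℚ) {n : ℕ} (hn : 0 < n) :
    qbinom (y + z) (2 * n - 1) = ∑ b ∈ Icc 1 n,
      (qbinom y (n + b - 1) * qbinom z (n - b) + qbinom z (n + b - 1) * qbinom y (n - b)) := by
  simp only [qbinom_eq_ringChoose, Ring.add_choose_eq _ (Commute.all y z)]
  rw [Nat.sum_antidiagonal_two_mul_sub_one (fun i j => Ring.choose y i * Ring.choose z j) hn]
  simp only [mul_comm (Ring.choose y _)]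

theorem guo_zeng_theorem3_equiv_general (m n : ℕ) (hn : 0 < n) (x : ℚ) :
    2 * ∑ a ∈ Finset.Icc 1 m, ∑ b ∈ Finset.Icc 1 n,
      qbinom (x + a - 1) (n + b - 1) * qbinom (x + m - a) (n - b) =
    (m : ℚ) * qbinom (2 * x + m - 1) (2 * n - 1) := by
  have hreflect : ∑ a ∈ Icc 1 m, ∑ b ∈ Icc 1 n,
      qbinom (x + m - a) (n + b - 1) * qbinom (x + a - 1) (n - b) =
      ∑ a ∈ Icc 1 m, ∑ b ∈ Icc 1 n,
      qbinom (x + a - 1) (n + b - 1) * qbinom (x + m - a) (n - b) := by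
    rw [← sum_Icc_one_reflect]
    refine sum_congr rfl fun a ha => ?_
    rw [mem_Icc] at ha
    rw [Nat.cast_sub (by omega)]
    push_cast
    ring_nf
  calc 2 * ∑ a ∈ Icc 1 m, ∑ b ∈ Icc 1 n,
        qbinom (x + a - 1) (n + b - 1) * qbinom (x + m - a) (n - b)
      = ∑ a ∈ Icc 1 m, ∑ b ∈ Icc 1 n,
        (qbinom (x + a - 1) (n + b - 1) * qbinom (x + m - a) (n - b) +
          qbinom (x + m - a) (n + b - 1) * qbinom (x + a - 1) (n - b)) := by
        rw [two_mul]
        nth_rw 2 [← hreflect]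
        simp only [← sum_add_distrib]
    _ = ∑ a ∈ Icc 1 m, qbinom (2 * x + m - 1) (2 * n - 1) := by
        refine sum_congr rfl fun a _ => ?_
        rw [← qbinom_add_two_mul_sub_one _ _ hn]
        ring_nf
    _ = m * qbinom (2 * x + m - 1) (2 * n - 1) := by simp

theorem guo_zeng_theorem3_equiv (m n : ℕ) (hm : 0 < m) (hn : 0 < n) (x : ℚ) :
    2 * ∑ a ∈ Finset.Icc 1 m, ∑ b ∈ Finset.Icc 1 n,
      qbinom (x + a - 1) (n + b - 1) * qbinom (x + m - a) (n - b) =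
    (m : ℚ) * qbinom (2 * x + m - 1) (2 * n - 1) :=
  guo_zeng_theorem3_equiv_general m n hn x
end
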